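/- arXiv:cs/0502055 — 5 statements merged into one kernel-verified Lean document; each statement's English description precedes it below -/
import Mathlib

section
/- Let π be any (n1,n2)-quasi-cyclic permutation of ℤ/Nℤ, let x_0 ∈ ℤ/Nℤ, let ℓ be odd, and let r = (r_1,…,r_ℓ) be a sequence of residues mod N with r_i ≡ 0 (mod n2) for every i = 1,…,ℓ. Then the last term of the sequence x(r,x_0) = (x_0,…,x_ℓ) satisfies x_ℓ = x_0 + (r_1 + … + r_ℓ) mod N; consequently d(x_0,x_ℓ) ≤ ‖r‖ and w_π(x(r,x_0)) ≤ 2‖r‖. -/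
/-- Circular absolute value of a residue mod `N`: the smallest absolute value of an
integer congruent to `r` mod `N`. -/
def zabs {N : ℕ} (r : ZMod N) : ℕ := min r.val (-r).val

/-- Circular distance on `ZMod N`. -/
def cdist {N : ℕ} (x y : ZMod N) : ℕ := zabs (y - x)

/-- The sequence `x(r, x₀)` determined by `x₀` and `r` (with `r` indexed from 1). -/
def xseq {N : ℕ} (π : Equiv.Perm (ZMod N)) (r : ℕ → ZMod N) (x0 : ZMod N) : ℕ → ZMod N
  | 0 => x0
  | k + 1 =>
    if (k + 1) % 2 = 1 then π.symm (π (xseq π r x0 k) + r (k + 1))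
    else xseq π r x0 k + r (k + 1)

/-- The π-weight of the even-numbered sequence `x 0, …, x ℓ` (`ℓ` odd). -/
def pweight {N : ℕ} (π : Equiv.Perm (ZMod N)) (ℓ : ℕ) (x : ℕ → ZMod N) : ℕ :=
  (∑ i ∈ Finset.Icc 1 ((ℓ - 1) / 2), cdist (x (2 * i - 1)) (x (2 * i)))
    + cdist (x 0) (x ℓ)
    + ∑ i ∈ Finset.Icc 0 ((ℓ - 1) / 2), cdist (π (x (2 * i))) (π (x (2 * i + 1)))

/-- The norm `‖r‖ = |r 1| + ⋯ + |r ℓ|`. -/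
def rnorm {N : ℕ} (ℓ : ℕ) (r : ℕ → ZMod N) : ℕ := ∑ k ∈ Finset.Icc 1 ℓ, zabs (r k)

/-- `r` `M`-cycles at `x₀` (for the permutation `π`). -/
def Mcycles {N : ℕ} (π : Equiv.Perm (ZMod N)) (M : ℕ) (r : ℕ → ZMod N) (ℓ : ℕ)
    (x0 : ZMod N) : Prop :=
  pweight π ℓ (xseq π r x0) ≤ M

/-- The `(n1, n2)`-quasi-cyclic map on `ZMod (n1 * n2)` associated with `σ` and `X`:
`φ ∘ Π ∘ φ⁻¹` where `φ(i,j) = i·n2 + j` and `Π(i,j) = (i + X j mod n1, σ j)`. -/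
def qcFun (n1 n2 : ℕ) (σ : Equiv.Perm (ZMod n2)) (X : ZMod n2 → ZMod n1) :
    ZMod (n1 * n2) → ZMod (n1 * n2) :=
  fun x =>
    ((((x.val / n2 + (X ((x.val % n2 : ℕ) : ZMod n2)).val) % n1) * n2
        + (σ ((x.val % n2 : ℕ) : ZMod n2)).val : ℕ) : ZMod (n1 * n2))

/-- Norm of a finite sequence given as a list. -/
def rnormL {N : ℕ} (r : List (ZMod N)) : ℕ := (r.map zabs).sum

/-- A list `r = (r 1, …, r ℓ)` `M`-cycles at `x₀`. -/
def McyclesL {N : ℕ} (π : Equiv.Perm (ZMod N)) (M : ℕ) (r : List (ZMod N))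
    (x0 : ZMod N) : Prop :=
  Mcycles π M (fun k => r.getD (k - 1) 0) r.length x0

/-- `Z(π)`: the number of couples `(r, x₀)` with `r` of odd length, nonzero entries and
`‖r‖ < M`, that `M`-cycle at `x₀`. -/
noncomputable def Zcount {N : ℕ} (π : Equiv.Perm (ZMod N)) (M : ℕ) : ℕ :=
  Set.ncard {p : List (ZMod N) × ZMod N |
    Odd p.1.length ∧ (∀ a ∈ p.1, a ≠ 0) ∧ rnormL p.1 < M ∧ McyclesL π M p.1 p.2}

/-- Circular interval `{a, a+1, …, a+t}` of length `t`. -/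
def cInterval {N : ℕ} (a : ZMod N) (t : ℕ) : Set (ZMod N) :=
  {x | ∃ s ≤ t, x = a + (s : ZMod N)}

section Aux

variable {N : ℕ}

lemma zabs_eq_natAbs_valMinAbs [NeZero N] (r : ZMod N) :
    zabs r = r.valMinAbs.natAbs := by
  have hN : 0 < N := Nat.pos_of_ne_zero (NeZero.ne N)
  have hv : r.val < N := ZMod.val_lt r
  rcases eq_or_ne r 0 with rfl | h0
  · simp [zabs, ZMod.valMinAbs_zero]
  · have hval : r.val ≠ 0 := by
      intro h; exact h0 ((ZMod.val_eq_zero r).mp h)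
    have hneg : (-r).val = N - r.val := by simp [ZMod.neg_val, h0]
    rw [ZMod.valMinAbs_def_pos, zabs, hneg]
    split_ifs with h
    · have : r.val ≤ N - r.val := by omega
      rw [min_eq_left this]
      exact (Int.natAbs_natCast _).symm
    · have : N - r.val ≤ r.val := by omega
      rw [min_eq_right this]
      omega

lemma zabs_add_le [NeZero N] (a b : ZMod N) : zabs (a + b) ≤ zabs a + zabs b := by
  rw [zabs_eq_natAbs_valMinAbs, zabs_eq_natAbs_valMinAbs, zabs_eq_natAbs_valMinAbs]
  have hle : (a + b).valMinAbs.natAbs ≤ (a.valMinAbs + b.valMinAbs).natAbs := by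
    apply ZMod.natAbs_min_of_le_div_two N
    · push_cast [ZMod.coe_valMinAbs]; ring
    · exact ZMod.natAbs_valMinAbs_le _
  calc (a + b).valMinAbs.natAbs ≤ (a.valMinAbs + b.valMinAbs).natAbs := hle
    _ ≤ a.valMinAbs.natAbs + b.valMinAbs.natAbs := Int.natAbs_add_le _ _

lemma zabs_sum_le [NeZero N] (s : Finset ℕ) (f : ℕ → ZMod N) :
    zabs (∑ k ∈ s, f k) ≤ ∑ k ∈ s, zabs (f k) := by
  classical
  induction s using Finset.cons_induction with
  | empty => simp [zabs]
  | cons a s ha ih =>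
    rw [Finset.sum_cons, Finset.sum_cons]
    exact le_trans (zabs_add_le _ _) (Nat.add_le_add_left ih _)

/-- Dropping an inner `% n1` under the cast of `k * n2` into `ZMod (n1 * n2)`. -/
lemma natCast_mod_mul (n1 n2 k : ℕ) :
    ((k % n1 : ℕ) : ZMod (n1 * n2)) * (n2 : ZMod (n1 * n2))
      = (k : ZMod (n1 * n2)) * (n2 : ZMod (n1 * n2)) := by
  have h : k % n1 * n2 + n1 * n2 * (k / n1) = k * n2 := by
    conv_rhs => rw [← Nat.mod_add_div k n1]
    ring
  calc ((k % n1 : ℕ) : ZMod (n1 * n2)) * (n2 : ZMod (n1 * n2))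
      = ((k % n1 * n2 + n1 * n2 * (k / n1) : ℕ) : ZMod (n1 * n2)) := by
        rw [Nat.cast_add, Nat.cast_mul, Nat.cast_mul (n1 * n2), ZMod.natCast_self,
          zero_mul, add_zero]
    _ = ((k * n2 : ℕ) : ZMod (n1 * n2)) := by rw [h]
    _ = (k : ZMod (n1 * n2)) * (n2 : ZMod (n1 * n2)) := by push_cast; ring

lemma qc_add (n1 n2 : ℕ) (h1 : 2 ≤ n1) (h2 : 2 ≤ n2)
    (σ : Equiv.Perm (ZMod n2)) (X : ZMod n2 → ZMod n1)
    (x ρ : ZMod (n1 * n2)) (hρ : (n2 : ZMod (n1 * n2)) ∣ ρ) :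
    qcFun n1 n2 σ X (x + ρ) = qcFun n1 n2 σ X x + ρ := by
  have hNpos : 0 < n1 * n2 := by positivity
  haveI : NeZero (n1 * n2) := ⟨by omega⟩
  -- `n2` divides `ρ.val`
  have hd : n2 ∣ ρ.val := by
    obtain ⟨c, hc⟩ := hρ
    have : ρ.val = (n2 * c.val) % (n1 * n2) := by
      rw [hc, ZMod.val_mul, ZMod.val_natCast]
      congr 1
      rw [Nat.mod_eq_of_lt]
      nlinarith
    rw [this]
    exact (Nat.dvd_mod_iff ⟨n1, (mul_comm n1 n2)⟩).mpr ⟨c.val, rfl⟩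
  obtain ⟨b, hb⟩ := hd
  set a := x.val with ha
  have hval : (x + ρ).val = (a + n2 * b) % (n1 * n2) := by
    rw [ZMod.val_add, hb]
  -- column is unchanged
  have hmod : (x + ρ).val % n2 = a % n2 := by
    rw [hval, Nat.mod_mod_of_dvd _ ⟨n1, (mul_comm n1 n2)⟩, Nat.add_mul_mod_self_left]
  -- row computation
  have hrow : (x + ρ).val / n2 = (a / n2 + b) % n1 := by
    rw [hval]
    have hsplit : a + n2 * b = n2 * (a / n2 + b) + a % n2 := by
      have := Nat.div_add_mod a n2; ring_nf; omega
    rw [hsplit]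
    set t := a / n2 + b with ht
    set s := a % n2 with hs
    have hslt : s < n2 := Nat.mod_lt _ (by omega)
    have hmodlt : n2 * (t % n1) + s < n1 * n2 := by
      have : t % n1 < n1 := Nat.mod_lt _ (by omega)
      nlinarith
    have : n2 * t + s = (n1 * n2) * (t / n1) + (n2 * (t % n1) + s) := by
      conv_lhs => rw [← Nat.div_add_mod t n1]
      ring
    rw [this, Nat.mul_add_mod, Nat.mod_eq_of_lt hmodlt,
      Nat.mul_add_div (by omega), Nat.div_eq_of_lt hslt, Nat.add_zero]
  -- now compute
  have hρcast : ρ = ((n2 * b : ℕ) : ZMod (n1 * n2)) := by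
    rw [← hb, ZMod.natCast_val, ZMod.cast_id]
  unfold qcFun
  rw [hmod, hrow, hρcast]
  set j := ((a % n2 : ℕ) : ZMod n2)
  set u := (X j).val
  set v := (σ j).val
  set q := a / n2
  push_cast
  rw [natCast_mod_mul n1 n2 ((q + b) % n1 + u), natCast_mod_mul n1 n2 (q + u)]
  push_cast
  rw [add_mul, natCast_mod_mul n1 n2 (q + b)]
  push_cast
  ring

lemma pi_add {n1 n2 : ℕ} (h1 : 2 ≤ n1) (h2 : 2 ≤ n2)
    (σ : Equiv.Perm (ZMod n2)) (X : ZMod n2 → ZMod n1)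
    (π : Equiv.Perm (ZMod (n1 * n2))) (hπ : ∀ x, π x = qcFun n1 n2 σ X x)
    (x ρ : ZMod (n1 * n2)) (hρ : (n2 : ZMod (n1 * n2)) ∣ ρ) :
    π (x + ρ) = π x + ρ := by
  rw [hπ, hπ, qc_add n1 n2 h1 h2 σ X x ρ hρ]

/-- Splitting `∑_{k=1}^{2m+1}` into even and odd indices. -/
lemma sum_split_parity (g : ℕ → ℕ) (m : ℕ) :
    (∑ i ∈ Finset.Icc 1 m, g (2 * i)) + ∑ i ∈ Finset.Icc 0 m, g (2 * i + 1)
      = ∑ k ∈ Finset.Icc 1 (2 * m + 1), g k := by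
  induction m with
  | zero => simp
  | succ m ih =>
    rw [Finset.sum_Icc_succ_top (by omega : 1 ≤ m + 1),
      Finset.sum_Icc_succ_top (by omega : 0 ≤ m + 1),
      show 2 * (m + 1) + 1 = (2 * m + 1 + 1) + 1 by ring,
      Finset.sum_Icc_succ_top (by omega : 1 ≤ 2 * m + 1 + 1 + 1),
      Finset.sum_Icc_succ_top (by omega : 1 ≤ 2 * m + 1 + 1)]
    rw [← ih, show 2 * (m + 1) = 2 * m + 1 + 1 from by ring,
      show 2 * m + 2 + 1 = 2 * m + 1 + 1 + 1 from by ring]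
    ring

end Aux

/-- Lemma 5, point 4: if all `r i` are `≡ 0 (mod n2)` and `π` is
`(n1,n2)`-quasi-cyclic, then `x_ℓ = x₀ + (r 1 + ⋯ + r ℓ)`, hence
`d(x₀,x_ℓ) ≤ ‖r‖` and `w_π(x(r,x₀)) ≤ 2‖r‖`. -/
theorem xseq_last_of_dvd (n1 n2 : ℕ) (h1 : 2 ≤ n1) (h2 : 2 ≤ n2)
    (σ : Equiv.Perm (ZMod n2)) (X : ZMod n2 → ZMod n1)
    (π : Equiv.Perm (ZMod (n1 * n2))) (hπ : ∀ x, π x = qcFun n1 n2 σ X x)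
    (x0 : ZMod (n1 * n2)) (ℓ : ℕ) (hℓ : Odd ℓ) (r : ℕ → ZMod (n1 * n2))
    (hr : ∀ k ∈ Finset.Icc 1 ℓ, (n2 : ZMod (n1 * n2)) ∣ r k) :
    xseq π r x0 ℓ = x0 + ∑ k ∈ Finset.Icc 1 ℓ, r k ∧
      cdist x0 (xseq π r x0 ℓ) ≤ rnorm ℓ r ∧
      pweight π ℓ (xseq π r x0) ≤ 2 * rnorm ℓ r := by
  haveI : NeZero (n1 * n2) := ⟨by positivity⟩
  -- each step just adds `r (k+1)`
  have hstep : ∀ k, k + 1 ≤ ℓ → xseq π r x0 (k + 1) = xseq π r x0 k + r (k + 1) := by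
    intro k hk
    have hd : (n2 : ZMod (n1 * n2)) ∣ r (k + 1) :=
      hr _ (Finset.mem_Icc.mpr ⟨by omega, hk⟩)
    rw [xseq]
    split_ifs with h
    · rw [← pi_add h1 h2 σ X π hπ _ _ hd, Equiv.symm_apply_apply]
    · rfl
  have hclosed : ∀ k, k ≤ ℓ → xseq π r x0 k = x0 + ∑ i ∈ Finset.Icc 1 k, r i := by
    intro k
    induction k with
    | zero => intro _; simp [xseq]
    | succ k ih =>
      intro hk
      rw [hstep k hk, ih (by omega),
        Finset.sum_Icc_succ_top (by omega : 1 ≤ k + 1), add_assoc]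
  have part1 := hclosed ℓ le_rfl
  have part2 : cdist x0 (xseq π r x0 ℓ) ≤ rnorm ℓ r := by
    rw [cdist, part1, add_sub_cancel_left, rnorm]
    exact zabs_sum_le _ _
  refine ⟨part1, part2, ?_⟩
  obtain ⟨m, hm⟩ := hℓ
  have hm2 : (ℓ - 1) / 2 = m := by omega
  have hA : ∀ i ∈ Finset.Icc 1 m,
      cdist (xseq π r x0 (2 * i - 1)) (xseq π r x0 (2 * i)) = zabs (r (2 * i)) := by
    intro i hi
    rw [Finset.mem_Icc] at hi
    have hs := hstep (2 * i - 1) (by omega)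
    rw [show 2 * i - 1 + 1 = 2 * i from by omega] at hs
    rw [cdist, hs, add_sub_cancel_left]
  have hB : ∀ i ∈ Finset.Icc 0 m,
      cdist (π (xseq π r x0 (2 * i))) (π (xseq π r x0 (2 * i + 1)))
        = zabs (r (2 * i + 1)) := by
    intro i hi
    rw [Finset.mem_Icc] at hi
    have hd : (n2 : ZMod (n1 * n2)) ∣ r (2 * i + 1) :=
      hr _ (Finset.mem_Icc.mpr ⟨by omega, by omega⟩)
    rw [cdist, hstep (2 * i) (by omega), pi_add h1 h2 σ X π hπ _ _ hd,
      add_sub_cancel_left]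
  have hx0 : xseq π r x0 0 = x0 := rfl
  rw [pweight, hm2, Finset.sum_congr rfl hA, Finset.sum_congr rfl hB, hx0]
  have hsplit := sum_split_parity (fun k => zabs (r k)) m
  have : (∑ i ∈ Finset.Icc 1 m, zabs (r (2 * i)))
      + ∑ i ∈ Finset.Icc 0 m, zabs (r (2 * i + 1)) = rnorm ℓ r := by
    rw [rnorm, hm]; exact hsplit
  omega
end

section
/- Let π be any (n1,n2)-quasi-cyclic permutation of ℤ/Nℤ and let M be a positive integer. If a sequence r = (r_1,…,r_ℓ) of residues mod N (ℓ odd) M-cycles at x_0 ∈ ℤ/Nℤ, then r also M-cycles at x_0 + n2 mod N. -/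
/-- Lemma 7: if `r` `M`-cycles at `x₀` for a quasi-cyclic `π`, then
`r` `M`-cycles at `x₀ + n2`. -/
theorem Mcycles_shift (n1 n2 M : ℕ) (h1 : 2 ≤ n1) (h2 : 2 ≤ n2) (hM : 0 < M)
    (σ : Equiv.Perm (ZMod n2)) (X : ZMod n2 → ZMod n1)
    (π : Equiv.Perm (ZMod (n1 * n2))) (hπ : ∀ x, π x = qcFun n1 n2 σ X x)
    (x0 : ZMod (n1 * n2)) (ℓ : ℕ) (hℓ : Odd ℓ) (r : ℕ → ZMod (n1 * n2))
    (hcyc : Mcycles π M r ℓ x0) :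
    Mcycles π M r ℓ (x0 + (n2 : ZMod (n1 * n2))) := by
  have hNpos : 0 < n1 * n2 := Nat.mul_pos (by omega) (by omega)
  haveI : NeZero (n1 * n2) := ⟨by omega⟩
  have hn2N : n2 < n1 * n2 := by nlinarith
  have hcast : ∀ a : ℕ, (((a % n1) * n2 : ℕ) : ZMod (n1 * n2))
      = ((a * n2 : ℕ) : ZMod (n1 * n2)) := by
    intro a
    have h : a * n2 = (a % n1) * n2 + (n1 * n2) * (a / n1) := by
      conv_lhs => rw [← Nat.mod_add_div a n1]
      ring
    rw [h, Nat.cast_add, Nat.cast_mul (n1 * n2), ZMod.natCast_self, zero_mul, add_zero]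
  have hcomm : ∀ x : ZMod (n1 * n2),
      π (x + (n2 : ZMod (n1 * n2))) = π x + (n2 : ZMod (n1 * n2)) := by
    intro x
    rw [hπ, hπ]
    unfold qcFun
    have hval : (x + (n2 : ZMod (n1 * n2))).val = (x.val + n2) % (n1 * n2) := by
      rw [ZMod.val_add, ZMod.val_natCast_of_lt hn2N]
    have hmod : (x + (n2 : ZMod (n1 * n2))).val % n2 = x.val % n2 := by
      rw [hval, Nat.mod_mod_of_dvd _ ⟨n1, mul_comm n1 n2⟩, Nat.add_mod_right]
    have hdiv : (x + (n2 : ZMod (n1 * n2))).val / n2 = (x.val / n2 + 1) % n1 := by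
      have key : ∀ w : ℕ, w % (n1 * n2) / n2 = w / n2 % n1 := by
        intro w
        rw [mul_comm n1 n2]
        exact Nat.mod_mul_right_div_self w n2 n1
      rw [hval, key, Nat.add_div_right _ (by omega)]
    rw [hmod, hdiv, Nat.mod_add_mod, Nat.cast_add, Nat.cast_add, hcast, hcast]
    push_cast
    ring
  have hsym : ∀ y : ZMod (n1 * n2),
      π.symm (y + (n2 : ZMod (n1 * n2))) = π.symm y + (n2 : ZMod (n1 * n2)) :=
    fun y => π.injective (by
      rw [Equiv.apply_symm_apply, hcomm, Equiv.apply_symm_apply])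
  have hx : ∀ k, xseq π r (x0 + (n2 : ZMod (n1 * n2))) k
      = xseq π r x0 k + (n2 : ZMod (n1 * n2)) := by
    intro k
    induction k with
    | zero => rfl
    | succ k ih =>
      unfold xseq
      split_ifs
      · rw [ih, hcomm, add_right_comm, hsym]
      · rw [ih, add_right_comm]
  have hcd : ∀ x y : ZMod (n1 * n2),
      cdist (x + (n2 : ZMod (n1 * n2))) (y + (n2 : ZMod (n1 * n2))) = cdist x y := by
    intro x y
    unfold cdist
    congr 1
    ring
  have hpw : pweight π ℓ (xseq π r (x0 + (n2 : ZMod (n1 * n2))))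
      = pweight π ℓ (xseq π r x0) := by
    unfold pweight
    congr 1
    · congr 1
      · exact Finset.sum_congr rfl fun i _ => by rw [hx, hx, hcd]
      · rw [hx, hx, hcd]
    · exact Finset.sum_congr rfl fun i _ => by rw [hx, hx, hcomm, hcomm, hcd]
  show pweight π ℓ (xseq π r (x0 + (n2 : ZMod (n1 * n2)))) ≤ M
  rw [hpw]
  exact hcyc
end

section
/- Let π be any (n1,n2)-quasi-cyclic permutation of ℤ/Nℤ and let M be a positive integer. Then Z(π), the number of couples (r,x_0) where x_0 ∈ ℤ/Nℤ and r is a sequence of odd length with nonzero residue entries mod N and ‖r‖ < M that M-cycles at x_0, is a multiple of n1. -/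
section Aux

lemma key_mod (n1 n2 a : ℕ) :
    (((a % n1) * n2 : ℕ) : ZMod (n1 * n2)) = ((a * n2 : ℕ) : ZMod (n1 * n2)) := by
  rw [ZMod.natCast_eq_natCast_iff]
  exact Nat.ModEq.mul_right' n2 (Nat.mod_modEq a n1)

lemma qcFun_comm (n1 n2 : ℕ) (h1 : 2 ≤ n1) (h2 : 2 ≤ n2)
    (σ : Equiv.Perm (ZMod n2)) (X : ZMod n2 → ZMod n1) (x : ZMod (n1 * n2)) :
    qcFun n1 n2 σ X (x + (n2 : ℕ)) = qcFun n1 n2 σ X x + (n2 : ℕ) := by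
  have hN : 0 < n1 * n2 := by positivity
  have hn2 : 0 < n2 := by omega
  haveI : NeZero (n1 * n2) := ⟨hN.ne'⟩
  have hn2N : n2 < n1 * n2 := by nlinarith
  set v := x.val with hv
  have hvlt : v < n1 * n2 := x.val_lt
  have hval : (x + (n2 : ℕ)).val = (v + n2) % (n1 * n2) := by
    rw [ZMod.val_add, ZMod.val_natCast, Nat.mod_eq_of_lt hn2N]
  set w := (v + n2) % (n1 * n2) with hw
  have hdvd : n2 ∣ n1 * n2 := dvd_mul_left n2 n1
  have hmod : w % n2 = v % n2 := by
    rw [hw, Nat.mod_mod_of_dvd _ hdvd, Nat.add_mod_right]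
  unfold qcFun
  rw [hval, hmod]
  set j : ZMod n2 := ((v % n2 : ℕ) : ZMod n2)
  set xj := (X j).val
  set sj := (σ j).val
  have e1 : (((w / n2 + xj) % n1 * n2 + sj : ℕ) : ZMod (n1*n2))
      = (((w / n2 + xj) * n2 : ℕ) : ZMod (n1*n2)) + (sj : ZMod (n1*n2)) := by
    push_cast [key_mod n1 n2 (w / n2 + xj)]; ring
  have e2 : (((v / n2 + xj) % n1 * n2 + sj : ℕ) : ZMod (n1*n2))
      = (((v / n2 + xj) * n2 : ℕ) : ZMod (n1*n2)) + (sj : ZMod (n1*n2)) := by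
    push_cast [key_mod n1 n2 (v / n2 + xj)]; ring
  rw [e1, e2]
  have hvn : (v + n2) / n2 = v / n2 + 1 := Nat.add_div_right v hn2
  have main : ((w / n2 * n2 : ℕ) : ZMod (n1*n2)) = ((v / n2 * n2 + n2 : ℕ) : ZMod (n1*n2)) := by
    rcases lt_or_ge (v + n2) (n1 * n2) with h | h
    · have hwv : w = v + n2 := Nat.mod_eq_of_lt h
      rw [hwv, hvn, add_mul, one_mul]
    · have hwv : w = v + n2 - n1 * n2 := by
        rw [hw, Nat.mod_eq_sub_mod h, Nat.mod_eq_of_lt (by omega)]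
      have hq : w / n2 + n1 = v / n2 + 1 := by
        have heq : w + n1 * n2 = v + n2 := by omega
        have h3 : (w + n1 * n2) / n2 = w / n2 + n1 := by
          rw [mul_comm n1 n2, Nat.add_mul_div_left w n1 hn2]
        have h5 : (v + n2) / n2 = w / n2 + n1 := by rw [← heq]; exact h3
        omega
      have hq2 : w / n2 * n2 + n1 * n2 = v / n2 * n2 + n2 := by
        have := congrArg (· * n2) hq
        simp only [add_mul, one_mul] at this
        linarith
      calc ((w / n2 * n2 : ℕ) : ZMod (n1*n2))
          = ((w / n2 * n2 + n1 * n2 : ℕ) : ZMod (n1*n2)) := by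
            rw [ZMod.natCast_eq_natCast_iff]
            exact (Nat.add_mod_right _ _).symm
        _ = _ := by rw [hq2]
  push_cast at main ⊢
  linear_combination main

lemma cdist_shift {N : ℕ} (x y c : ZMod N) : cdist (x + c) (y + c) = cdist x y := by
  unfold cdist; ring_nf

lemma symm_comm {N : ℕ} (π : Equiv.Perm (ZMod N)) (c : ZMod N)
    (hc : ∀ x, π (x + c) = π x + c) (y : ZMod N) : π.symm (y + c) = π.symm y + c := by
  apply π.injective
  rw [Equiv.apply_symm_apply, hc, Equiv.apply_symm_apply]

lemma xseq_shift {N : ℕ} (π : Equiv.Perm (ZMod N)) (c : ZMod N)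
    (hc : ∀ x, π (x + c) = π x + c) (r : ℕ → ZMod N) (x0 : ZMod N) (k : ℕ) :
    xseq π r (x0 + c) k = xseq π r x0 k + c := by
  induction k with
  | zero => rfl
  | succ k ih =>
    unfold xseq
    rw [ih]
    split
    · rw [hc, add_right_comm, symm_comm π c hc]
    · rw [add_right_comm]

lemma pweight_shift {N : ℕ} (π : Equiv.Perm (ZMod N)) (c : ZMod N)
    (hc : ∀ x, π (x + c) = π x + c) (ℓ : ℕ) (x : ℕ → ZMod N) :
    pweight π ℓ (fun k => x k + c) = pweight π ℓ x := by
  unfold pweight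
  congr 1
  · congr 1
    · exact Finset.sum_congr rfl fun i _ => cdist_shift _ _ _
    · exact cdist_shift _ _ _
  · refine Finset.sum_congr rfl fun i _ => ?_
    rw [hc, hc, cdist_shift]

lemma Mcycles_shift_s10 {N : ℕ} (π : Equiv.Perm (ZMod N)) (c : ZMod N)
    (hc : ∀ x, π (x + c) = π x + c) (M : ℕ) (r : ℕ → ZMod N) (ℓ : ℕ) (x0 : ZMod N) :
    Mcycles π M r ℓ (x0 + c) ↔ Mcycles π M r ℓ x0 := by
  unfold Mcycles
  rw [show xseq π r (x0 + c) = fun k => xseq π r x0 k + c from funext (xseq_shift π c hc r x0),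
    pweight_shift π c hc]

end Aux

/-- Lemma 7, consequence: for any `(n1,n2)`-quasi-cyclic `π`,
`Z(π)` is a multiple of `n1`. -/
theorem n1_dvd_Zcount (n1 n2 M : ℕ) (h1 : 2 ≤ n1) (h2 : 2 ≤ n2) (hM : 0 < M)
    (σ : Equiv.Perm (ZMod n2)) (X : ZMod n2 → ZMod n1)
    (π : Equiv.Perm (ZMod (n1 * n2))) (hπ : ∀ x, π x = qcFun n1 n2 σ X x) :
    n1 ∣ Zcount π M := by
  classical
  have hN : 0 < n1 * n2 := by positivity
  haveI : NeZero (n1 * n2) := ⟨hN.ne'⟩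
  haveI : NeZero n1 := ⟨by omega⟩
  haveI : NeZero n2 := ⟨by omega⟩
  set c : ZMod (n1 * n2) := ((n2 : ℕ) : ZMod (n1 * n2)) with hcdef
  have hc : ∀ x, π (x + c) = π x + c := fun x => by
    rw [hπ, hπ, hcdef]; exact qcFun_comm n1 n2 h1 h2 σ X x
  set S := {p : List (ZMod (n1 * n2)) × ZMod (n1 * n2) |
    Odd p.1.length ∧ (∀ a ∈ p.1, a ≠ 0) ∧ rnormL p.1 < M ∧ McyclesL π M p.1 p.2} with hS
  have hZ : Zcount π M = S.ncard := rfl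
  have hshift1 : ∀ r x, (r, x) ∈ S → (r, x + c) ∈ S := by
    rintro r x ⟨ho, hnz, hnorm, hmc⟩
    exact ⟨ho, hnz, hnorm, (Mcycles_shift_s10 π c hc M _ _ x).mpr hmc⟩
  have hshiftm : ∀ (m : ℕ) r x, (r, x) ∈ S → (r, x + (m : ZMod (n1 * n2)) * c) ∈ S := by
    intro m
    induction m with
    | zero => intro r x h; simpa using h
    | succ m ih =>
      intro r x h
      have := hshift1 r (x + (m : ZMod (n1 * n2)) * c) (ih r x h)
      push_cast
      rw [add_mul, one_mul, ← add_assoc]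
      exact this
  by_cases hfin : S.Finite
  · rw [hZ, Set.ncard_eq_toFinset_card S hfin]
    set F := hfin.toFinset with hF
    set q : ZMod (n1 * n2) →+* ZMod n2 := ZMod.castHom (dvd_mul_left n2 n1) (ZMod n2) with hq
    have hqval : ∀ y : ZMod (n1 * n2), q y = (y.val : ZMod n2) := fun y => by
      rw [hq, ZMod.castHom_apply, ← ZMod.natCast_val]
    set g : List (ZMod (n1 * n2)) × ZMod (n1 * n2) → List (ZMod (n1 * n2)) × ZMod n2 :=
      fun p => (p.1, q p.2) with hg
    set T := F.image g with hT
    have hmem : ∀ p ∈ F, g p ∈ T := fun p hp => Finset.mem_image_of_mem g hp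
    rw [Finset.card_eq_sum_card_fiberwise hmem]
    have hfiber : ∀ t ∈ T, (F.filter (fun a => g a = t)).card = n1 := by
      intro t ht
      obtain ⟨p, hpF, hpt⟩ := Finset.mem_image.mp ht
      have hpS : p ∈ S := hfin.mem_toFinset.mp hpF
      have hinj : Function.Injective
          (fun k : ZMod n1 => (p.1, p.2 + (k.val : ZMod (n1 * n2)) * c)) := by
        intro k k' hkk
        have h2' : (k.val : ZMod (n1 * n2)) * c = (k'.val : ZMod (n1 * n2)) * c := by
          have := congrArg Prod.snd hkk
          simpa using this
        rw [hcdef, ← Nat.cast_mul, ← Nat.cast_mul] at h2'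
        have hlt : k.val * n2 < n1 * n2 := by have := k.val_lt; nlinarith
        have hlt' : k'.val * n2 < n1 * n2 := by have := k'.val_lt; nlinarith
        have := congrArg ZMod.val h2'
        rw [ZMod.val_cast_of_lt hlt, ZMod.val_cast_of_lt hlt'] at this
        have : k.val = k'.val := Nat.eq_of_mul_eq_mul_right (by omega) this
        exact ZMod.val_injective n1 this
      have hset : F.filter (fun a => g a = t) =
          Finset.image (fun k : ZMod n1 => (p.1, p.2 + (k.val : ZMod (n1 * n2)) * c))
            Finset.univ := by
        ext a
        simp only [Finset.mem_filter, Finset.mem_image, Finset.mem_univ, true_and]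
        constructor
        · rintro ⟨haF, hat⟩
          have haS : a ∈ S := hfin.mem_toFinset.mp haF
          rw [← hpt] at hat
          rw [hg] at hat
          simp only [Prod.mk.injEq] at hat
          obtain ⟨h1', h2'⟩ := hat
          have hker : q (a.2 - p.2) = 0 := by rw [map_sub, h2', sub_self]
          rw [hqval] at hker
          have hdvd2 : n2 ∣ (a.2 - p.2).val :=
            (ZMod.natCast_eq_zero_iff _ _).mp hker
          obtain ⟨m, hm⟩ := hdvd2
          have hmlt : m < n1 := by
            by_contra hcon
            push_neg at hcon
            have hvl := (a.2 - p.2).val_lt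
            rw [hm] at hvl
            nlinarith
          refine ⟨(m : ZMod n1), ?_⟩
          have hkv : ((m : ZMod n1)).val = m := ZMod.val_cast_of_lt hmlt
          have ha2 : a.2 = p.2 + ((m : ZMod (n1 * n2)) * c) := by
            have : ((a.2 - p.2).val : ZMod (n1 * n2)) = a.2 - p.2 := by
              rw [ZMod.natCast_val, ZMod.cast_id]
            rw [hm] at this
            push_cast at this
            rw [hcdef]
            push_cast
            rw [mul_comm (m : ZMod (n1 * n2)) _, this]
            ring
          rw [hkv]
          exact Prod.ext_iff.mpr ⟨h1'.symm, ha2.symm⟩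
        · rintro ⟨k, hk⟩
          subst hk
          constructor
          · exact hfin.mem_toFinset.mpr (hshiftm k.val p.1 p.2 hpS)
          · rw [← hpt, hg]
            simp only [Prod.mk.injEq, true_and]
            rw [map_add, map_mul]
            have : q c = 0 := by
              rw [hcdef, map_natCast, ZMod.natCast_self]
            rw [this, mul_zero, add_zero]
      rw [hset, Finset.card_image_of_injective _ hinj, Finset.card_univ, ZMod.card]
    rw [Finset.sum_congr rfl hfiber, Finset.sum_const, smul_eq_mul]
    exact dvd_mul_left n1 T.card
  · rw [hZ, Set.Infinite.ncard hfin]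
    exact dvd_zero n1
end

section
/- Let π be a permutation of ℤ/Nℤ and let v ⊆ ℤ/Nℤ, u = π⁻¹(v). Suppose v is contained in a union of pairwise disjoint circular intervals I_1,…,I_m, each satisfying |I_j ∩ v| ≥ 2, and u is contained in a union of pairwise disjoint circular intervals J_1,…,J_k, each satisfying |J_i ∩ u| ≥ 2, with m, k ≥ 1. Then there exist an odd ℓ ≥ 1 and pairwise distinct elements x_0, x_1, …, x_ℓ of u such that the π-weight satisfies w_π(x_0,…,x_ℓ) ≤ Σ_{j=1}^{m} L(I_j) + Σ_{i=1}^{k} L(J_i), where L(I) denotes the length of the circular interval I. -/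
/-!
View `u = π⁻¹(v)` as the edge set of a bipartite multigraph on the intervals: `x ∈ u` joins the
`I_j` containing `π x` to the `J_i` containing `x`. Since every interval meets `v` (resp. `u`) at
least twice, every vertex has degree at least two, so there is a walk that never leaves a vertex
by the edge it came in on; the vertex set being finite, this walk closes up into a cycle through
distinct vertices. Its edges, listed in order starting with two that meet in some `I_j`, are the
required `x₀, …, x_ℓ`: the terms of `w_π` are distances inside pairwise different intervals, each
at most the length of its interval.
-/

open Function Set

section BlockWalk

variable {α β : Type*} {g : ℕ → α → β}

theorem Function.Periodic.apply_eq_of_modEq {γ : Type*} {f : ℕ → γ} {c a b : ℕ}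
    (hf : Periodic f c) (h : a ≡ b [MOD c]) : f a = f b := by
  rw [← hf.map_mod_nat a, ← hf.map_mod_nat b]
  exact congrArg f h

theorem Finite.exists_apply_eq_injOn_Ioc [Finite β] (f : ℕ → β) :
    ∃ p n, p < n ∧ f n = f p ∧ InjOn f (Ioc p n) := by
  classical
  have hex : ∃ n p, p < n ∧ f n = f p := by
    obtain ⟨a, b, hab, h⟩ := Finite.exists_ne_map_eq_of_infinite f
    rcases hab.lt_or_gt with hlt | hlt
    exacts [⟨b, a, hlt, h.symm⟩, ⟨a, b, hlt, h⟩]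
  obtain ⟨p, hpn, hrep⟩ := Nat.find_spec hex
  have hmin : ∀ a b, a < b → b < Nat.find hex → f b ≠ f a :=
    fun a b hab hb h => Nat.find_min hex hb ⟨a, hab, h⟩
  refine ⟨p, Nat.find hex, hpn, hrep, fun a ha b hb hab => ?_⟩
  simp only [mem_Ioc] at ha hb
  by_contra hne
  wlog hlt : a < b generalizing a b
  · exact this b a hab.symm hb ha (Ne.symm hne) (by omega)
  rcases hb.2.lt_or_eq with hbn | rfl
  · exact hmin a b hlt hbn hab.symm
  · exact hmin p a ha.1 hlt (hab.trans hrep)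

/-- `g n` labels the blocks available to the `n`-th step. -/
def IsBlockWalk (g : ℕ → α → β) (W : ℕ → α) : Prop :=
  ∀ n, W (n + 1) ≠ W n ∧ g n (W (n + 1)) = g n (W n)

structure IsBlockCycle (g : ℕ → α → β) (L : ℕ) (x : ℕ → α) : Prop where
  walk : IsBlockWalk g x
  periodic : Periodic x L
  block_modEq : ∀ a b, g a (x a) = g b (x b) → a ≡ b [MOD L]

theorem exists_isBlockWalk (hmate : ∀ n y, ∃ z ≠ y, g n z = g n y) (y₀ : α) :
    ∃ W, IsBlockWalk g W := by
  choose next hne hblock using hmate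
  let W : ℕ → α := fun n => n.rec y₀ next
  exact ⟨W, fun n => ⟨hne n (W n), hblock n (W n)⟩⟩

theorem IsBlockCycle.rotate {L k : ℕ} {x : ℕ → α} (hg : Periodic g 2)
    (h : IsBlockCycle (fun n => g (n + k)) L x) : IsBlockCycle g L (fun n => x (n + k)) := by
  have hgk : ∀ n, g (n + k + k) = g n := fun n => by
    rw [add_assoc, ← two_mul, mul_comm]
    exact hg.nat_mul k n
  refine ⟨fun n => ?_, fun n => ?_, fun a b hab => ?_⟩
  · rw [add_right_comm n 1 k, ← hgk n]
    exact h.walk (n + k)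
  · rw [add_right_comm]
    exact h.periodic (n + k)
  · refine Nat.ModEq.add_right_cancel' k (h.block_modEq (a + k) (b + k) ?_)
    simpa only [hgk] using hab

theorem IsBlockCycle.injOn {L : ℕ} {x : ℕ → α} (hg : Periodic g 2) (h : IsBlockCycle g L x) :
    InjOn x (Iio L) := by
  have hblock : ∀ a b, a < L → b < L → g a (x a) = g b (x b) → a = b :=
    fun a b ha hb hab => (h.block_modEq a b hab).eq_of_lt_of_lt ha hb
  intro a ha b hb hab
  simp only [mem_Iio] at ha hb
  wlog hle : a ≤ b generalizing a b
  · exact (this hab.symm hb ha (by omega)).symm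
  by_cases hpar : a % 2 = b % 2
  · exact hblock a b ha hb (by rw [hg.apply_eq_of_modEq hpar, hab])
  -- otherwise `x a = x b` lies in the block of the step from `x (b - 1)` to `x b`
  obtain ⟨c, rfl⟩ : ∃ c, b = c + 1 := ⟨b - 1, by omega⟩
  have hac : a = c := hblock a c ha (by omega) <| by
    rw [hg.apply_eq_of_modEq (show a % 2 = c % 2 by omega), hab, (h.walk c).2]
  subst hac
  exact absurd hab.symm (h.walk a).1

theorem IsBlockWalk.ne_of_repeat {W : ℕ → α} {p L : ℕ} (hW : IsBlockWalk g W)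
    (hg : Periodic g 2) (hL : Even L) (hL0 : 0 < L)
    (hinj : InjOn (fun n => g n (W n)) (Ioc p (p + L))) : W (p + 1) ≠ W (p + L) := by
  obtain ⟨c, rfl⟩ := hL
  -- otherwise steps `p + 1` and `p + L - 1` use the same block, so `L = 2`
  intro h
  have hstep := (hW (p + (c + c) - 1)).2
  rw [show p + (c + c) - 1 + 1 = p + (c + c) by omega, ← h,
    hg.apply_eq_of_modEq (show (p + (c + c) - 1) % 2 = (p + 1) % 2 by omega)] at hstep
  have h2 : p + 1 = p + (c + c) - 1 :=
    hinj (by simp only [mem_Ioc]; omega) (by simp only [mem_Ioc]; omega) <| by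
      simp only [hstep]
      exact congrFun (hg.apply_eq_of_modEq (by unfold Nat.ModEq; omega)) _
  exact (hW (p + 1)).1 (by rw [show p + 1 + 1 = p + (c + c) by omega, ← h])

theorem IsBlockWalk.isBlockCycle_of_repeat {W : ℕ → α} {p L : ℕ} (hW : IsBlockWalk g W)
    (hg : Periodic g 2) (hL : Even L) (hL0 : 0 < L)
    (hinj : InjOn (fun n => g n (W n)) (Ioc p (p + L)))
    (hrep : g (p + L) (W (p + L)) = g p (W p)) :
    IsBlockCycle (fun n => g (n + (p + 1))) L (fun r => W (r % L + (p + 1))) := by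
  have hgL : Periodic g L := by
    obtain ⟨c, rfl⟩ := hL
    rw [← two_mul, mul_comm]
    exact hg.nat_mul c
  have hshift : ∀ r, g (r + (p + 1)) = g (r % L + (p + 1)) :=
    fun r => hgL.apply_eq_of_modEq ((Nat.mod_modEq r L).symm.add_right _)
  refine ⟨fun r => ?_, fun r => by simp only [Nat.add_mod_right], fun a b hab => ?_⟩
  · have hsucc : (r + 1) % L = (r % L + 1) % L := (Nat.mod_modEq r L).symm.add_right 1
    have hmod : r % L < L := Nat.mod_lt r hL0
    rw [hshift, hsucc]
    rcases (show r % L + 1 < L ∨ r % L + 1 = L by omega) with hlt | heq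
    · rw [Nat.mod_eq_of_lt hlt, add_right_comm]
      exact hW (r % L + (p + 1))
    · -- the closing step, from `W (p + L)` back to `W (p + 1)`, stays in the repeated block
      rw [heq, Nat.mod_self, show r % L + (p + 1) = p + L by omega, hgL p, zero_add]
      refine ⟨hW.ne_of_repeat hg hL hL0 hinj, ?_⟩
      rw [(hW p).2, ← hrep, hgL p]
  · rw [hshift a, hshift b] at hab
    have := hinj (by simp only [mem_Ioc]; have := Nat.mod_lt a hL0; omega)
      (by simp only [mem_Ioc]; have := Nat.mod_lt b hL0; omega) hab
    exact Nat.add_right_cancel this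

theorem exists_isBlockCycle [Finite β] [Nonempty α] (hg : Periodic g 2)
    (hcol : ∀ a b y z, g a y = g b z → a ≡ b [MOD 2]) (hmate : ∀ n y, ∃ z ≠ y, g n z = g n y) :
    ∃ d x, IsBlockCycle g (2 * d + 2) x := by
  obtain ⟨W, hW⟩ := exists_isBlockWalk hmate (Classical.arbitrary α)
  obtain ⟨p, n, hpn, hrep, hinj⟩ := Finite.exists_apply_eq_injOn_Ioc fun n => g n (W n)
  obtain ⟨d, rfl⟩ : ∃ d, n = p + (2 * d + 2) := by
    have := hcol _ _ _ _ hrep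
    unfold Nat.ModEq at this
    exact ⟨(n - p - 2) / 2, by omega⟩
  exact ⟨d, _, (hW.isBlockCycle_of_repeat hg ⟨d + 1, by ring⟩ (by omega) hinj hrep).rotate hg⟩

end BlockWalk

section AltBlock

variable {α ι κ : Type*} (R : α → ι) (B : α → κ)

def altBlock (n : ℕ) (x : α) : ι ⊕ κ :=
  if Even n then .inl (R x) else .inr (B x)

@[simp]
theorem altBlock_two_mul (q : ℕ) (x : α) : altBlock R B (2 * q) x = .inl (R x) := by
  simp [altBlock]

@[simp]
theorem altBlock_two_mul_add_one (q : ℕ) (x : α) : altBlock R B (2 * q + 1) x = .inr (B x) := by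
  simp [altBlock]

theorem altBlock_periodic : Periodic (altBlock R B) 2 := fun n => by
  funext x
  simp [altBlock, Nat.even_add]

variable {R B}

theorem modEq_two_of_altBlock_eq {a b : ℕ} {x y : α} (h : altBlock R B a x = altBlock R B b y) :
    a ≡ b [MOD 2] := by
  by_cases ha : Even a <;> by_cases hb : Even b <;>
    simp only [altBlock, ha, hb, ↓reduceIte, reduceCtorEq] at h <;>
    simp only [Nat.even_iff] at ha hb <;> unfold Nat.ModEq <;> omega

theorem exists_ne_altBlock_eq (hR : ∀ y, ∃ z ≠ y, R z = R y) (hB : ∀ y, ∃ z ≠ y, B z = B y)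
    (n : ℕ) (y : α) : ∃ z ≠ y, altBlock R B n z = altBlock R B n y := by
  obtain ⟨q, rfl | rfl⟩ := Nat.even_or_odd' n
  · obtain ⟨z, hz, h⟩ := hR y
    exact ⟨z, hz, by simp [h]⟩
  · obtain ⟨z, hz, h⟩ := hB y
    exact ⟨z, hz, by simp [h]⟩

end AltBlock

theorem exists_ne_apply_eq_of_two_le_ncard {γ δ ι : Type*} (S : ι → Set γ) {T : Set γ}
    (e : δ → γ) {R : δ → ι} (hR : ∀ y, e y ∈ S (R y))
    (hdisj : ∀ j j', j ≠ j' → Disjoint (S j) (S j')) (hT : T ⊆ range e)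
    (h2 : ∀ j, 2 ≤ (S j ∩ T).ncard) (y : δ) : ∃ z ≠ y, R z = R y := by
  obtain ⟨w, ⟨hwS, hwT⟩, hw⟩ := exists_ne_of_one_lt_ncard (h2 (R y)) (e y)
  obtain ⟨z, rfl⟩ := hT hwT
  refine ⟨z, fun h => hw (h ▸ rfl), ?_⟩
  by_contra h
  exact disjoint_left.mp (hdisj _ _ h) (hR z) hwS

section CircularDistance

variable {N : ℕ}

theorem zabs_le_val (r : ZMod N) : zabs r ≤ r.val := min_le_left _ _

theorem cdist_comm (x y : ZMod N) : cdist x y = cdist y x := by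
  rw [cdist, cdist, ← neg_sub, zabs, zabs, neg_neg, min_comm]

theorem cdist_le_of_mem_cInterval {a x y : ZMod N} {t : ℕ} (hx : x ∈ cInterval a t)
    (hy : y ∈ cInterval a t) : cdist x y ≤ t := by
  obtain ⟨c, hc, rfl⟩ := hx
  obtain ⟨c', hc', rfl⟩ := hy
  wlog hle : c ≤ c' generalizing c c'
  · rw [cdist_comm]
    exact this c' hc' c hc (by omega)
  have hsub : a + (c' : ZMod N) - (a + c) = ((c' - c : ℕ) : ZMod N) := by
    rw [Nat.cast_sub hle]
    ring
  calc cdist (a + (c : ZMod N)) (a + c') ≤ ((c' - c : ℕ) : ZMod N).val := by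
        rw [cdist, hsub]
        exact zabs_le_val _
    _ ≤ t := by
        rw [ZMod.val_natCast]
        exact (Nat.mod_le _ _).trans (by omega)

end CircularDistance

theorem Finset.sum_comp_le_sum_univ {ι κ : Type*} [Fintype κ] {s : Finset ι} {f : ι → κ}
    (hf : InjOn f s) (w : κ → ℕ) : ∑ i ∈ s, w (f i) ≤ ∑ j, w j := by
  classical
  rw [← Finset.sum_image hf]
  exact Finset.sum_le_sum_of_subset (Finset.subset_univ _)

theorem pweight_le_of_isBlockCycle {N m k : ℕ} {π : Equiv.Perm (ZMod N)} {a : Fin m → ZMod N}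
    {t : Fin m → ℕ} {b : Fin k → ZMod N} {s : Fin k → ℕ} {u : Set (ZMod N)} {R : u → Fin m}
    {B : u → Fin k} (hR : ∀ y, π y ∈ cInterval (a (R y)) (t (R y)))
    (hB : ∀ y : u, ↑y ∈ cInterval (b (B y)) (s (B y))) {d : ℕ} {x : ℕ → u}
    (hx : IsBlockCycle (altBlock R B) (2 * d + 2) x) :
    pweight π (2 * d + 1) (fun n => x n) ≤ ∑ j, t j + ∑ i, s i := by
  have hred : ∀ q, R (x (2 * q + 1)) = R (x (2 * q)) := fun q => by
    simpa using (hx.walk (2 * q)).2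
  have hblue : ∀ q, B (x (2 * q + 2)) = B (x (2 * q + 1)) := fun q => by
    simpa using (hx.walk (2 * q + 1)).2
  have hRinj : InjOn (fun q => R (x (2 * q))) (Finset.Icc 0 d) := fun q hq q' hq' h => by
    simp only [Finset.coe_Icc, mem_Icc] at hq hq'
    have := (hx.block_modEq (2 * q) (2 * q') (by simpa using h)).eq_of_lt_of_lt
      (by omega) (by omega)
    omega
  have hBinj : InjOn (fun q => B (x (2 * q + 1))) (Finset.range (d + 1)) := fun q hq q' hq' h => by
    simp only [Finset.coe_range, mem_Iio] at hq hq'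
    have := (hx.block_modEq (2 * q + 1) (2 * q' + 1) (by simpa using h)).eq_of_lt_of_lt
      (by omega) (by omega)
    omega
  have hred_le : ∑ i ∈ Finset.Icc 0 d, cdist (π (x (2 * i))) (π (x (2 * i + 1))) ≤ ∑ j, t j :=
    calc _ ≤ ∑ i ∈ Finset.Icc 0 d, t (R (x (2 * i))) :=
          Finset.sum_le_sum fun i _ => cdist_le_of_mem_cInterval (hR _) (hred i ▸ hR _)
      _ ≤ ∑ j, t j := Finset.sum_comp_le_sum_univ hRinj t
  have hclose : (x 0 : ZMod N) ∈ cInterval (b (B (x (2 * d + 1)))) (s (B (x (2 * d + 1)))) := by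
    rw [← hx.periodic.eq, ← hblue]
    exact hB _
  have hblue_le : ∑ i ∈ Finset.Icc 1 d, cdist (x (2 * i - 1) : ZMod N) (x (2 * i))
      + cdist (x 0 : ZMod N) (x (2 * d + 1)) ≤ ∑ i, s i :=
    calc _ = ∑ i ∈ Finset.range d, cdist (x (2 * i + 1) : ZMod N) (x (2 * i + 2))
          + cdist (x 0 : ZMod N) (x (2 * d + 1)) := by
          rw [← Finset.Ico_add_one_right_eq_Icc, Finset.sum_Ico_eq_sum_range]
          congr 1
          refine Finset.sum_congr (by simp) fun i _ => ?_
          rw [show 2 * (1 + i) - 1 = 2 * i + 1 by omega, show 2 * (1 + i) = 2 * i + 2 by omega]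
      _ ≤ ∑ i ∈ Finset.range d, s (B (x (2 * i + 1))) + s (B (x (2 * d + 1))) :=
          add_le_add (Finset.sum_le_sum fun i _ => cdist_le_of_mem_cInterval (hB _)
            (hblue i ▸ hB _)) (cdist_le_of_mem_cInterval hclose (hB _))
      _ = ∑ i ∈ Finset.range (d + 1), s (B (x (2 * i + 1))) := (Finset.sum_range_succ _ _).symm
      _ ≤ ∑ i, s i := Finset.sum_comp_le_sum_univ hBinj s
  unfold pweight
  rw [show (2 * d + 1 - 1) / 2 = d by omega]
  linarith

theorem exists_low_pweight_cycle_general (N : ℕ) (π : Equiv.Perm (ZMod N))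
    (v : Set (ZMod N)) (m k : ℕ) (hk : 1 ≤ k)
    (a : Fin m → ZMod N) (t : Fin m → ℕ)
    (b : Fin k → ZMod N) (s : Fin k → ℕ)
    (hdisjI : ∀ j j', j ≠ j' → Disjoint (cInterval (a j) (t j)) (cInterval (a j') (t j')))
    (hvI : v ⊆ ⋃ j, cInterval (a j) (t j))
    (hvI2 : ∀ j, 2 ≤ (cInterval (a j) (t j) ∩ v).ncard)
    (hdisjJ : ∀ i i', i ≠ i' → Disjoint (cInterval (b i) (s i)) (cInterval (b i') (s i')))
    (huJ : (⇑π ⁻¹' v) ⊆ ⋃ i, cInterval (b i) (s i))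
    (huJ2 : ∀ i, 2 ≤ (cInterval (b i) (s i) ∩ (⇑π ⁻¹' v)).ncard) :
    ∃ ℓ : ℕ, Odd ℓ ∧ 1 ≤ ℓ ∧ ∃ x : ℕ → ZMod N,
      (∀ i ≤ ℓ, ∀ j ≤ ℓ, i ≠ j → x i ≠ x j) ∧
      (∀ i ≤ ℓ, x i ∈ ⇑π ⁻¹' v) ∧
      pweight π ℓ x ≤ (∑ j, t j) + ∑ i, s i := by
  choose R hR using fun y : ↥(⇑π ⁻¹' v) => mem_iUnion.mp (hvI y.2)
  choose B hB using fun y : ↥(⇑π ⁻¹' v) => mem_iUnion.mp (huJ y.2)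
  have hRmate := exists_ne_apply_eq_of_two_le_ncard (fun j => cInterval (a j) (t j))
    (fun y : ↥(⇑π ⁻¹' v) => π y) hR hdisjI
    (fun w hw => ⟨⟨π.symm w, by simpa using hw⟩, by simp⟩) hvI2
  have hBmate := exists_ne_apply_eq_of_two_le_ncard (fun i => cInterval (b i) (s i))
    Subtype.val hB hdisjJ (fun w hw => ⟨⟨w, hw⟩, rfl⟩) huJ2
  obtain ⟨y₀, -, hy₀⟩ : (cInterval (b ⟨0, hk⟩) (s ⟨0, hk⟩) ∩ ⇑π ⁻¹' v).Nonempty :=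
    nonempty_of_ncard_ne_zero (by have := huJ2 ⟨0, hk⟩; omega)
  have : Nonempty ↥(⇑π ⁻¹' v) := ⟨⟨y₀, hy₀⟩⟩
  obtain ⟨d, x, hx⟩ := exists_isBlockCycle (altBlock_periodic R B)
    (fun _ _ _ _ => modEq_two_of_altBlock_eq) (exists_ne_altBlock_eq hRmate hBmate)
  refine ⟨2 * d + 1, odd_two_mul_add_one d, by omega, fun n => x n, fun i hi j hj hij hxij => ?_,
    fun n _ => (x n).2, pweight_le_of_isBlockCycle hR hB hx⟩
  exact hij (hx.injOn (altBlock_periodic R B) (mem_Iio.mpr (by omega)) (mem_Iio.mpr (by omega))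
    (Subtype.val_injective hxij))

/-- combinatorial content of Lemma 3: if `v` is covered by disjoint
circular intervals each meeting `v` at least twice, and likewise `u = π⁻¹(v)`, then
there is an odd-length sequence of distinct elements of `u` whose `π`-weight is at
most the sum of all interval lengths. -/
theorem exists_low_pweight_cycle (N : ℕ) (hN : 2 ≤ N) (π : Equiv.Perm (ZMod N))
    (v : Set (ZMod N)) (m k : ℕ) (hm : 1 ≤ m) (hk : 1 ≤ k)
    (a : Fin m → ZMod N) (t : Fin m → ℕ) (ht : ∀ j, t j < N)
    (b : Fin k → ZMod N) (s : Fin k → ℕ) (hs : ∀ i, s i < N)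
    (hdisjI : ∀ j j', j ≠ j' → Disjoint (cInterval (a j) (t j)) (cInterval (a j') (t j')))
    (hvI : v ⊆ ⋃ j, cInterval (a j) (t j))
    (hvI2 : ∀ j, 2 ≤ (cInterval (a j) (t j) ∩ v).ncard)
    (hdisjJ : ∀ i i', i ≠ i' → Disjoint (cInterval (b i) (s i)) (cInterval (b i') (s i')))
    (huJ : (⇑π ⁻¹' v) ⊆ ⋃ i, cInterval (b i) (s i))
    (huJ2 : ∀ i, 2 ≤ (cInterval (b i) (s i) ∩ (⇑π ⁻¹' v)).ncard) :
    ∃ ℓ : ℕ, Odd ℓ ∧ 1 ≤ ℓ ∧ ∃ x : ℕ → ZMod N,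
      (∀ i ≤ ℓ, ∀ j ≤ ℓ, i ≠ j → x i ≠ x j) ∧
      (∀ i ≤ ℓ, x i ∈ ⇑π ⁻¹' v) ∧
      pweight π ℓ x ≤ (∑ j, t j) + ∑ i, s i :=
  exists_low_pweight_cycle_general N π v m k hk a t b s hdisjI hvI hvI2 hdisjJ huJ huJ2
end

section
/- Let π be a permutation of ℤ/Nℤ, let M be a positive integer, let ℓ ≥ 1 be odd, and let x_0, x_1, …, x_ℓ be pairwise distinct elements of ℤ/Nℤ with w_π(x_0,…,x_ℓ) ≤ M. Then there exists a sequence r = (r_1,…,r_ℓ) of nonzero residues mod N such that x(r,x_0) = (x_0,…,x_ℓ), ‖r‖ < M, and r M-cycles at x_0. -/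
lemma sum_split_aux (f : ℕ → ℕ) (m : ℕ) :
    ∑ k ∈ Finset.Icc 1 (2*m+1), f k
      = (∑ i ∈ Finset.Icc 1 m, f (2*i)) + ∑ i ∈ Finset.Icc 0 m, f (2*i+1) := by
  induction m with
  | zero => simp
  | succ m ih =>
    have h1 : (2*(m+1)+1) = (2*m+2)+1 := by ring
    rw [h1, Finset.sum_Icc_succ_top (by omega), show 2*m+2 = (2*m+1)+1 by ring,
      Finset.sum_Icc_succ_top (by omega), ih,
      Finset.sum_Icc_succ_top (by omega : 1 ≤ m+1),
      Finset.sum_Icc_succ_top (by omega : 0 ≤ m+1)]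
    have e1 : 2*(m+1) = 2*m+1+1 := by ring
    rw [e1]; ring

/-- Lemma 4 mechanism: distinct `x₀, …, x_ℓ` of `π`-weight `≤ M`
come from a nonzero sequence `r` with `‖r‖ < M` that `M`-cycles at `x₀`. -/
theorem exists_r_of_low_pweight (N M : ℕ) (hN : 2 ≤ N) (hM : 0 < M)
    (π : Equiv.Perm (ZMod N)) (ℓ : ℕ) (hℓ : Odd ℓ) (hℓ1 : 1 ≤ ℓ)
    (x : ℕ → ZMod N) (hdist : ∀ i ≤ ℓ, ∀ j ≤ ℓ, i ≠ j → x i ≠ x j)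
    (hw : pweight π ℓ x ≤ M) :
    ∃ r : ℕ → ZMod N, (∀ k ∈ Finset.Icc 1 ℓ, r k ≠ 0) ∧
      (∀ i ≤ ℓ, xseq π r (x 0) i = x i) ∧
      rnorm ℓ r < M ∧ Mcycles π M r ℓ (x 0) := by
  haveI : NeZero N := ⟨by omega⟩
  obtain ⟨m, hm⟩ := hℓ
  set r : ℕ → ZMod N := fun k =>
    if k % 2 = 1 then π (x k) - π (x (k - 1)) else x k - x (k - 1) with hr
  have hx : ∀ i ≤ ℓ, xseq π r (x 0) i = x i := by
    intro i
    induction i with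
    | zero => intro _; rfl
    | succ k ih =>
      intro hk
      have hk' : k ≤ ℓ := by omega
      have hxk := ih hk'
      show (if (k + 1) % 2 = 1 then π.symm (π (xseq π r (x 0) k) + r (k + 1))
        else xseq π r (x 0) k + r (k + 1)) = x (k + 1)
      have hrk : r (k + 1) = if (k + 1) % 2 = 1 then π (x (k + 1)) - π (x k)
          else x (k + 1) - x k := by simp [hr]
      by_cases hpar : (k + 1) % 2 = 1
      · simp only [hpar, if_pos, hrk, hxk, if_true]
        rw [add_sub_cancel, Equiv.symm_apply_apply]
      · simp only [hpar, if_false, hrk, hxk, if_neg hpar]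
        rw [add_sub_cancel]
  have hrne : ∀ k ∈ Finset.Icc 1 ℓ, r k ≠ 0 := by
    intro k hk
    simp only [Finset.mem_Icc] at hk
    have hne : x k ≠ x (k - 1) := hdist k hk.2 (k - 1) (by omega) (by omega)
    by_cases hpar : k % 2 = 1
    · simp only [hr, hpar, if_true]
      exact sub_ne_zero.mpr fun h => hne (π.injective h)
    · simp only [hr, hpar, if_false]
      exact sub_ne_zero.mpr hne
  have hmℓ : (ℓ - 1) / 2 = m := by omega
  have hnorm : rnorm ℓ r + cdist (x 0) (x ℓ) = pweight π ℓ x := by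
    unfold rnorm pweight
    rw [hmℓ, hm, sum_split_aux (fun k => zabs (r k)) m]
    have h1 : ∀ i ∈ Finset.Icc 1 m, zabs (r (2 * i)) = cdist (x (2 * i - 1)) (x (2 * i)) := by
      intro i hi
      simp only [Finset.mem_Icc] at hi
      have : (2 * i) % 2 = 0 := by omega
      simp [hr, this, cdist]
    have h2 : ∀ i ∈ Finset.Icc 0 m, zabs (r (2 * i + 1))
        = cdist (π (x (2 * i))) (π (x (2 * i + 1))) := by
      intro i _
      have hp : (2 * i + 1) % 2 = 1 := by omega
      have he : 2 * i + 1 - 1 = 2 * i := by omega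
      simp [hr, hp, he, cdist]
    rw [Finset.sum_congr rfl h1, Finset.sum_congr rfl h2]
    ring
  have hpos : 0 < cdist (x 0) (x ℓ) := by
    have hne : x ℓ - x 0 ≠ 0 := sub_ne_zero.mpr (hdist ℓ le_rfl 0 (by omega) (by omega))
    have h1 : (x ℓ - x 0).val ≠ 0 := fun h => hne ((ZMod.val_eq_zero _).mp h)
    have h2 : (-(x ℓ - x 0)).val ≠ 0 := fun h => hne (by
      have := (ZMod.val_eq_zero _).mp h; exact neg_eq_zero.mp this)
    unfold cdist zabs
    omega
  have hrn : rnorm ℓ r < M := by omega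
  refine ⟨r, hrne, hx, hrn, ?_⟩
  unfold Mcycles
  have hpw : pweight π ℓ (xseq π r (x 0)) = pweight π ℓ x := by
    unfold pweight
    rw [hmℓ]
    congr 1
    · congr 1
      · refine Finset.sum_congr rfl fun i hi => ?_
        simp only [Finset.mem_Icc] at hi
        rw [hx (2 * i - 1) (by omega), hx (2 * i) (by omega)]
      · rw [hx 0 (by omega), hx ℓ le_rfl]
    · refine Finset.sum_congr rfl fun i hi => ?_
      simp only [Finset.mem_Icc] at hi
      rw [hx (2 * i) (by omega), hx (2 * i + 1) (by omega)]
  rw [hpw]; exact hw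
end
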